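/- Let a : ℕ → ℤ with a_d = 0 for d > v, let l ≥ 1 be minimal with a_l ≠ 0, and let p > v be a prime. Define f(m) = ∑_{d ∣ m} a_d · d · θ(m/d) with θ(n) = ∑_{e ∣ n} e·μ(e). Then f(l·p^i) = a_l · l · (1 − p) for every i ≥ 1; in particular f(l·p^i) ≠ 0 and is independent of i. -/

import Mathlib

/-- `θ(n) = ∑_{e ∣ n} e · μ(e)`, where `μ` is the Möbius function. -/
def theta (n : ℕ) : ℤ :=
  ∑ e ∈ n.divisors, (e : ℤ) * ArithmeticFunction.moebius e

/-- `f(m) = ∑_{d ∣ m} a_d · d · θ(m/d)`. -/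
def convTheta (a : ℕ → ℤ) (m : ℕ) : ℤ :=
  ∑ d ∈ m.divisors, a d * d * theta (m / d)

/-! Among the divisors of `l · p^i`, those below `p` are exactly the divisors of `l`. Since `a`
vanishes above `v < p` and below `l`, only `d = l` survives in `f(l · p^i)`, leaving
`a_l · l · θ(p^i)`, and `θ(p^i) = 1 − p` because `μ` kills every divisor of `p^i` beyond `p`. -/

open ArithmeticFunction ArithmeticFunction.Moebius in
theorem theta_prime_pow {p k : ℕ} (hp : p.Prime) (hk : k ≠ 0) :
    theta (p ^ k) = 1 - p := by
  obtain ⟨j, rfl⟩ := Nat.exists_eq_add_of_le' (Nat.one_le_iff_ne_zero.mpr hk)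
  have hvanish : ∀ m ∈ Finset.range j, ((p ^ (m + 2) : ℕ) : ℤ) * μ (p ^ (m + 2)) = 0 := by
    intro m _
    rw [moebius_apply_prime_pow hp (by omega), if_neg (by omega), mul_zero]
  rw [theta, Nat.sum_divisors_prime_pow hp, Finset.sum_range_succ', Finset.sum_range_succ',
    Finset.sum_eq_zero hvanish]
  simp only [zero_add, pow_one, pow_zero, moebius_apply_prime hp, moebius_apply_one, Nat.cast_one]
  ring

theorem convTheta_eq_of_forall_ne {a : ℕ → ℤ} {m l : ℕ} (hlm : l ∣ m) (hm : m ≠ 0)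
    (h : ∀ d, d ∣ m → d ≠ l → a d = 0) :
    convTheta a m = a l * l * theta (m / l) := by
  refine Finset.sum_eq_single_of_mem l (Nat.mem_divisors.mpr ⟨hlm, hm⟩) fun d hd hdl => ?_
  rw [h d (Nat.dvd_of_mem_divisors hd) hdl, zero_mul, zero_mul]

theorem Nat.dvd_of_dvd_mul_prime_pow_of_lt {p d l k : ℕ} (hp : p.Prime) (hd : 0 < d)
    (hdp : d < p) (h : d ∣ l * p ^ k) : d ∣ l := by
  have hcop : p.Coprime d := hp.coprime_iff_not_dvd.mpr fun hpd => (Nat.le_of_dvd hd hpd).not_gt hdp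
  exact (hcop.symm.pow_right k).dvd_of_dvd_mul_right h

/-- Let `a : ℕ → ℤ` with `a_d = 0` for `d > v`, let `l ≥ 1` be minimal with
`a_l ≠ 0`, and let `p > v` be a prime. Then `f(l·p^i) = a_l · l · (1 − p)` for
every `i ≥ 1`; in particular `f(l·p^i) ≠ 0` and is independent of `i`. -/
theorem convTheta_at_l_pow (v : ℕ) (a : ℕ → ℤ) (ha : ∀ d, v < d → a d = 0)
    (l : ℕ) (hl : 1 ≤ l) (hal : a l ≠ 0) (hmin : ∀ d, 0 < d → d < l → a d = 0)
    (p : ℕ) (hp : p.Prime) (hpv : v < p) (i : ℕ) (hi : 1 ≤ i) :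
    convTheta a (l * p ^ i) = a l * l * (1 - (p : ℤ)) ∧
      convTheta a (l * p ^ i) ≠ 0 := by
  have hm : l * p ^ i ≠ 0 := Nat.mul_ne_zero (by omega) (pow_ne_zero _ hp.ne_zero)
  have honly : ∀ d, d ∣ l * p ^ i → d ≠ l → a d = 0 := by
    intro d hd hdl
    rcases lt_or_ge v d with hvd | hdv
    · exact ha d hvd
    have hd0 : 0 < d := Nat.pos_of_dvd_of_pos hd (Nat.pos_of_ne_zero hm)
    have hd_dvd_l := Nat.dvd_of_dvd_mul_prime_pow_of_lt hp hd0 (by omega) hd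
    exact hmin d hd0 ((Nat.le_of_dvd (by omega) hd_dvd_l).lt_of_ne hdl)
  have hvalue : convTheta a (l * p ^ i) = a l * l * (1 - (p : ℤ)) := by
    rw [convTheta_eq_of_forall_ne (dvd_mul_right l _) hm honly,
      Nat.mul_div_cancel_left _ (by omega), theta_prime_pow hp (by omega)]
  refine ⟨hvalue, hvalue ▸ mul_ne_zero (mul_ne_zero hal (by positivity)) ?_⟩
  have := hp.two_le
  omega
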